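/- Let H be a complex Hilbert space, J : H → H a unitary operator with J* = −J, L ⊆ H a closed Lagrangian subspace (L^⊥ = J(L)) with orthogonal projection P, and Φ := Φ(L) := Π_{−i} ∘ (Π_i|_L)^{−1} : H_i → H_{−i} the associated unitary. Then for every u ∈ H one has P u = ½( Π_i u + Φ*(Π_{−i} u) + Φ(Π_i u) + Π_{−i} u ), i.e. with respect to the decomposition H = H_i ⊕ H_{−i} the projection P has the block matrix ½ [[I, Φ*],[Φ, I]]; in particular Φ = 2·Π_{−i} ∘ P restricted to H_i. -/

import Mathlib

/-!
Since `J² = -1`, the operators `Π_{±i}` are complementary projections onto `H_{±i}`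
with `Π_{±i} ∘ J = ±i Π_{±i}`. Every `u` splits as `u = a + J w` with `a = P u ∈ L`
and `w ∈ L`, because `u - P u ∈ Lᗮ = J(L)`. As `Φ` sends `Π_i x` to `Π_{-i} x` for
`x ∈ L`, this gives `Φ (Π_i u) = Π_{-i} a + i Π_{-i} w` and
`Φ* (Π_{-i} u) = Π_i a - i Π_i w`, so the four terms of the formula add up to
`2 (Π_i a + Π_{-i} a) = 2 a = 2 P u`.
-/

/-- The orthogonal projection `Π_i = ½(I − iJ)` onto the `i`-eigenspace of `J`. -/
noncomputable def PiP {H : Type*} [NormedAddCommGroup H] [InnerProductSpace ℂ H]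
    (J : H →L[ℂ] H) : H →L[ℂ] H := (2 : ℂ)⁻¹ • (1 - Complex.I • J)

/-- The orthogonal projection `Π_{−i} = ½(I + iJ)` onto the `−i`-eigenspace of `J`. -/
noncomputable def PiM {H : Type*} [NormedAddCommGroup H] [InnerProductSpace ℂ H]
    (J : H →L[ℂ] H) : H →L[ℂ] H := (2 : ℂ)⁻¹ • (1 + Complex.I • J)

/-- The `i`-eigenspace `H_i = ker(J − i·I)` of `J`. -/
noncomputable def eigP {H : Type*} [NormedAddCommGroup H] [InnerProductSpace ℂ H]
    (J : H →L[ℂ] H) : Submodule ℂ H := LinearMap.ker ((J - Complex.I • (1 : H →L[ℂ] H) : H →L[ℂ] H) : H →ₗ[ℂ] H)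

/-- The `−i`-eigenspace `H_{−i} = ker(J + i·I)` of `J`. -/
noncomputable def eigM {H : Type*} [NormedAddCommGroup H] [InnerProductSpace ℂ H]
    (J : H →L[ℂ] H) : Submodule ℂ H := LinearMap.ker ((J + Complex.I • (1 : H →L[ℂ] H) : H →L[ℂ] H) : H →ₗ[ℂ] H)

section

open Complex

variable {H : Type*} [NormedAddCommGroup H] [InnerProductSpace ℂ H] {J : H →L[ℂ] H}

theorem mem_eigP_iff {x : H} : x ∈ eigP J ↔ J x = I • x := by
  simp [eigP, sub_eq_zero]

theorem mem_eigM_iff {x : H} : x ∈ eigM J ↔ J x = -(I • x) := by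
  simp [eigM, add_eq_zero_iff_eq_neg]

theorem PiP_add_PiM (x : H) : PiP J x + PiM J x = x := by
  simp only [PiP, PiM, smul_apply, sub_apply, add_apply, one_apply_eq_self]
  module

theorem PiP_apply_of_mem_eigP {x : H} (hx : x ∈ eigP J) : PiP J x = x := by
  simp only [PiP, smul_apply, sub_apply, one_apply_eq_self, mem_eigP_iff.1 hx]
  match_scalars
  norm_num [Complex.ext_iff]

theorem PiM_apply_of_mem_eigP {x : H} (hx : x ∈ eigP J) : PiM J x = 0 := by
  simp only [PiM, smul_apply, add_apply, one_apply_eq_self, mem_eigP_iff.1 hx]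
  match_scalars
  norm_num [Complex.ext_iff]

theorem PiM_apply_of_mem_eigM {x : H} (hx : x ∈ eigM J) : PiM J x = x := by
  simp only [PiM, smul_apply, add_apply, one_apply_eq_self, mem_eigM_iff.1 hx, smul_neg]
  match_scalars
  norm_num [Complex.ext_iff]

theorem apply_apply_eq_neg_of_adjoint [CompleteSpace H]
    (hJ : (ContinuousLinearMap.adjoint J).comp J = 1) (hskew : ContinuousLinearMap.adjoint J = -J)
    (x : H) : J (J x) = -x := by
  simpa [hskew, neg_eq_iff_eq_neg] using congrArg (· x) hJ

theorem PiP_apply_J (hJ : ∀ x, J (J x) = -x) (x : H) : PiP J (J x) = I • PiP J x := by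
  simp only [PiP, smul_apply, sub_apply, one_apply_eq_self, hJ, smul_sub, smul_neg]
  match_scalars <;> norm_num [Complex.ext_iff]

theorem PiM_apply_J (hJ : ∀ x, J (J x) = -x) (x : H) : PiM J (J x) = -(I • PiM J x) := by
  simp only [PiM, smul_apply, add_apply, one_apply_eq_self, hJ, smul_add, smul_neg]
  match_scalars <;> norm_num [Complex.ext_iff]

theorem PiP_apply_mem_eigP (hJ : ∀ x, J (J x) = -x) (x : H) : PiP J x ∈ eigP J := by
  rw [mem_eigP_iff]
  simp only [PiP, smul_apply, sub_apply, one_apply_eq_self, map_smul, map_sub, hJ, smul_sub,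
    smul_neg]
  match_scalars <;> norm_num [Complex.ext_iff]

theorem PiM_apply_mem_eigM (hJ : ∀ x, J (J x) = -x) (x : H) : PiM J x ∈ eigM J := by
  rw [mem_eigM_iff]
  simp only [PiM, smul_apply, add_apply, one_apply_eq_self, map_smul, map_add, hJ, smul_add,
    smul_neg]
  match_scalars <;> norm_num [Complex.ext_iff]

theorem coe_apply_PiP_eq (hJ : ∀ x, J (J x) = -x) {L : Submodule ℂ H}
    (Φ : eigP J ≃ₗᵢ[ℂ] eigM J)
    (hΦ : ∀ u ∈ L, ∀ h : PiP J u ∈ eigP J, (Φ ⟨PiP J u, h⟩ : H) = PiM J u)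
    {u a w : H} (ha : a ∈ L) (hw : w ∈ L) (hu : u = a + J w) (h : PiP J u ∈ eigP J) :
    (Φ ⟨PiP J u, h⟩ : H) = PiM J a + I • PiM J w := by
  subst hu
  have hsplit : (⟨PiP J (a + J w), h⟩ : eigP J)
      = ⟨PiP J a, PiP_apply_mem_eigP hJ a⟩ + I • ⟨PiP J w, PiP_apply_mem_eigP hJ w⟩ :=
    Subtype.ext (by simp [PiP_apply_J hJ])
  rw [hsplit, map_add, map_smul]
  simp [hΦ a ha, hΦ w hw]

theorem coe_symm_apply_PiM_eq (hJ : ∀ x, J (J x) = -x) {L : Submodule ℂ H}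
    (Φ : eigP J ≃ₗᵢ[ℂ] eigM J)
    (hΦ : ∀ u ∈ L, ∀ h : PiP J u ∈ eigP J, (Φ ⟨PiP J u, h⟩ : H) = PiM J u)
    {u a w : H} (ha : a ∈ L) (hw : w ∈ L) (hu : u = a + J w) (h : PiM J u ∈ eigM J) :
    (Φ.symm ⟨PiM J u, h⟩ : H) = PiP J a - I • PiP J w := by
  subst hu
  have hsplit : Φ.symm ⟨PiM J (a + J w), h⟩
      = ⟨PiP J a, PiP_apply_mem_eigP hJ a⟩ - I • ⟨PiP J w, PiP_apply_mem_eigP hJ w⟩ := by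
    rw [LinearIsometryEquiv.symm_apply_eq, map_sub, map_smul]
    ext
    simp [hΦ a ha, hΦ w hw, PiM_apply_J hJ, sub_eq_add_neg]
  rw [hsplit]
  rfl

theorem IsStarProjection.exists_mem_eq_apply_add_J [CompleteSpace H] {P : H →L[ℂ] H}
    (hP : IsStarProjection P) {L : Submodule ℂ H}
    (hPrange : LinearMap.range (P : H →ₗ[ℂ] H) = L) (hLag : Lᗮ = L.map (J : H →ₗ[ℂ] H))
    (u : H) : ∃ w ∈ L, u = P u + J w := by
  obtain ⟨_, hPeq⟩ := isStarProjection_iff_eq_starProjection_range.1 hP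
  have hperp := P.range.sub_starProjection_mem_orthogonal u
  rw [← hPeq, hPrange, hLag] at hperp
  obtain ⟨w, hw, hJw⟩ := hperp
  exact ⟨w, hw, eq_add_of_sub_eq' hJw.symm⟩

theorem IsStarProjection.apply_eq_two_inv_smul_blocks [CompleteSpace H]
    (hJ : ∀ x, J (J x) = -x)
    {L : Submodule ℂ H} (hLag : Lᗮ = L.map (J : H →ₗ[ℂ] H)) {P : H →L[ℂ] H}
    (hP : IsStarProjection P) (hPrange : LinearMap.range (P : H →ₗ[ℂ] H) = L)
    (Φ : eigP J ≃ₗᵢ[ℂ] eigM J)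
    (hΦ : ∀ u ∈ L, ∀ h : PiP J u ∈ eigP J, (Φ ⟨PiP J u, h⟩ : H) = PiM J u)
    (u : H) (h1 : PiP J u ∈ eigP J) (h2 : PiM J u ∈ eigM J) :
    P u = (2 : ℂ)⁻¹ • (PiP J u + (Φ.symm ⟨PiM J u, h2⟩ : H)
      + (Φ ⟨PiP J u, h1⟩ : H) + PiM J u) := by
  obtain ⟨w, hw, hu⟩ := hP.exists_mem_eq_apply_add_J hPrange hLag u
  set a := P u
  have ha : a ∈ L := hPrange ▸ LinearMap.mem_range_self _ u
  have hPiP : PiP J u = PiP J a + I • PiP J w := by rw [hu, map_add, PiP_apply_J hJ]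
  have hPiM : PiM J u = PiM J a - I • PiM J w := by
    rw [hu, map_add, PiM_apply_J hJ, sub_eq_add_neg]
  rw [coe_apply_PiP_eq hJ Φ hΦ ha hw hu, coe_symm_apply_PiM_eq hJ Φ hΦ ha hw hu, hPiP, hPiM]
  conv_lhs => rw [← PiP_add_PiM (J := J) a]
  module

theorem IsStarProjection.coe_apply_eq_two_smul_PiM [CompleteSpace H] (hJ : ∀ x, J (J x) = -x)
    {L : Submodule ℂ H} (hLag : Lᗮ = L.map (J : H →ₗ[ℂ] H)) {P : H →L[ℂ] H}
    (hP : IsStarProjection P) (hPrange : LinearMap.range (P : H →ₗ[ℂ] H) = L)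
    (Φ : eigP J ≃ₗᵢ[ℂ] eigM J)
    (hΦ : ∀ u ∈ L, ∀ h : PiP J u ∈ eigP J, (Φ ⟨PiP J u, h⟩ : H) = PiM J u)
    (v : eigP J) : (Φ v : H) = (2 : ℂ) • PiM J (P v) := by
  have hPv := hP.apply_eq_two_inv_smul_blocks hJ hLag hPrange Φ hΦ v
    (PiP_apply_mem_eigP hJ v) (PiM_apply_mem_eigM hJ v)
  have hPiP : (⟨PiP J v, PiP_apply_mem_eigP hJ v⟩ : eigP J) = v :=
    Subtype.ext (PiP_apply_of_mem_eigP v.2)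
  have hPiM : (⟨PiM J v, PiM_apply_mem_eigM hJ v⟩ : eigM J) = 0 :=
    Subtype.ext (PiM_apply_of_mem_eigP v.2)
  rw [hPiP, hPiM, PiP_apply_of_mem_eigP v.2, PiM_apply_of_mem_eigP v.2, map_zero,
    ZeroMemClass.coe_zero, add_zero, add_zero] at hPv
  rw [hPv, map_smul, map_add, PiM_apply_of_mem_eigP v.2, PiM_apply_of_mem_eigM (Φ v).2]
  module

end

theorem stmt7_general {H : Type*} [NormedAddCommGroup H] [InnerProductSpace ℂ H] [CompleteSpace H]
    (J : H →L[ℂ] H)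
    (hJunitary : (ContinuousLinearMap.adjoint J).comp J = 1 ∧
      J.comp (ContinuousLinearMap.adjoint J) = 1)
    (hJskew : ContinuousLinearMap.adjoint J = -J)
    (L : Submodule ℂ H)
    (hLag : Lᗮ = L.map (J : H →ₗ[ℂ] H))
    (P : H →L[ℂ] H)
    (hPsa : ContinuousLinearMap.adjoint P = P)
    (hPidem : P.comp P = P)
    (hPrange : LinearMap.range (P : H →ₗ[ℂ] H) = L)
    (Φ : (eigP J) ≃ₗᵢ[ℂ] (eigM J))
    (hΦ : ∀ u ∈ L, ∀ h : PiP J u ∈ eigP J, (Φ ⟨PiP J u, h⟩ : H) = PiM J u) :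
    (∀ u : H, ∀ (h1 : PiP J u ∈ eigP J) (h2 : PiM J u ∈ eigM J),
       P u = (2 : ℂ)⁻¹ • (PiP J u + (Φ.symm ⟨PiM J u, h2⟩ : H)
                + (Φ ⟨PiP J u, h1⟩ : H) + PiM J u)) ∧
    (∀ v : eigP J, (Φ v : H) = (2 : ℂ) • PiM J (P (v : H))) := by
  have hJ := apply_apply_eq_neg_of_adjoint hJunitary.1 hJskew
  have hP : IsStarProjection P :=
    ⟨hPidem, by rwa [IsSelfAdjoint, ContinuousLinearMap.star_eq_adjoint]⟩
  exact ⟨hP.apply_eq_two_inv_smul_blocks hJ hLag hPrange Φ hΦ,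
    hP.coe_apply_eq_two_smul_PiM hJ hLag hPrange Φ hΦ⟩

/-- For `J` unitary with `J* = −J`, `L` closed Lagrangian with orthogonal
projection `P`, and `Φ = Φ(L) : H_i → H_{−i}` the associated unitary
(characterized by `Φ(Π_i u) = Π_{−i} u` for `u ∈ L`; `Φ* = Φ.symm` since `Φ` is
unitary), one has `P u = ½(Π_i u + Φ*(Π_{−i} u) + Φ(Π_i u) + Π_{−i} u)` for all
`u ∈ H`, i.e. `P = ½ [[I, Φ*],[Φ, I]]` w.r.t. `H = H_i ⊕ H_{−i}`; in particular
`Φ = 2·Π_{−i} ∘ P` on `H_i`. -/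
theorem stmt7 {H : Type*} [NormedAddCommGroup H] [InnerProductSpace ℂ H] [CompleteSpace H]
    (J : H →L[ℂ] H)
    (hJunitary : (ContinuousLinearMap.adjoint J).comp J = 1 ∧
      J.comp (ContinuousLinearMap.adjoint J) = 1)
    (hJskew : ContinuousLinearMap.adjoint J = -J)
    (L : Submodule ℂ H) (hL : IsClosed (L : Set H))
    (hLag : Lᗮ = L.map (J : H →ₗ[ℂ] H))
    (P : H →L[ℂ] H)
    (hPsa : ContinuousLinearMap.adjoint P = P)
    (hPidem : P.comp P = P)
    (hPrange : LinearMap.range (P : H →ₗ[ℂ] H) = L)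
    (Φ : (eigP J) ≃ₗᵢ[ℂ] (eigM J))
    (hΦ : ∀ u ∈ L, ∀ h : PiP J u ∈ eigP J, (Φ ⟨PiP J u, h⟩ : H) = PiM J u) :
    (∀ u : H, ∀ (h1 : PiP J u ∈ eigP J) (h2 : PiM J u ∈ eigM J),
       P u = (2 : ℂ)⁻¹ • (PiP J u + (Φ.symm ⟨PiM J u, h2⟩ : H)
                + (Φ ⟨PiP J u, h1⟩ : H) + PiM J u)) ∧
    (∀ v : eigP J, (Φ v : H) = (2 : ℂ) • PiM J (P (v : H))) :=
  stmt7_general J hJunitary hJskew L hLag P hPsa hPidem hPrange Φ hΦ
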